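/- arXiv:1911.12594 — 2 statements merged into one kernel-verified Lean document; each statement's English description precedes it below -/
import Mathlib

section
/- Let G be a finite group with a proper factorization G = AB such that the factorization graph F(G) contains no induced 4-cycle. Then either A is a maximal subgroup of G or B is a maximal subgroup of G. -/
open scoped Pointwise

/-- The factorization graph of `G` has an induced 4-cycle (square): four distinct
vertices (proper subgroups not contained in the Frattini subgroup) with the
cycle products equal to `G` and the diagonal products not equal to `G`. -/
def HasInducedSquare (G : Type*) [Group G] : Prop :=
  ∃ A B C D : Subgroup G,
    (A ≠ ⊤ ∧ ¬ A ≤ frattini G) ∧ (B ≠ ⊤ ∧ ¬ B ≤ frattini G) ∧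
    (C ≠ ⊤ ∧ ¬ C ≤ frattini G) ∧ (D ≠ ⊤ ∧ ¬ D ≤ frattini G) ∧
    A ≠ B ∧ A ≠ C ∧ A ≠ D ∧ B ≠ C ∧ B ≠ D ∧ C ≠ D ∧
    (A : Set G) * (B : Set G) = Set.univ ∧ (B : Set G) * (C : Set G) = Set.univ ∧
    (C : Set G) * (D : Set G) = Set.univ ∧ (D : Set G) * (A : Set G) = Set.univ ∧
    (A : Set G) * (C : Set G) ≠ Set.univ ∧ (B : Set G) * (D : Set G) ≠ Set.univ

/-!
If neither factor of `G = AB` is maximal, pick proper subgroups `A < M` and `B < N`.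
Enlarging a factor keeps the product equal to `G`, so `A - B - M - N - A` is a 4-cycle of
`F(G)`, while `AM = M` and `BN = N` are proper, so its diagonals are not edges.
-/

namespace Subgroup

variable {G : Type*} [Group G] {X Y X' Y' K : Subgroup G}

lemma eq_top_of_mul_eq_univ (hXK : X ≤ K) (hYK : Y ≤ K)
    (h : (X : Set G) * (Y : Set G) = Set.univ) : K = ⊤ := by
  rw [eq_top_iff']
  intro g
  obtain ⟨x, hx, y, hy, rfl⟩ : g ∈ (X : Set G) * (Y : Set G) := h ▸ Set.mem_univ g
  exact K.mul_mem (hXK hx) (hYK hy)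

lemma mul_eq_univ_of_le (hX : X ≤ X') (hY : Y ≤ Y')
    (h : (X : Set G) * (Y : Set G) = Set.univ) : (X' : Set G) * (Y' : Set G) = Set.univ :=
  Set.eq_univ_of_univ_subset (h ▸ Set.mul_subset_mul hX hY)

lemma mul_eq_univ_comm (h : (X : Set G) * (Y : Set G) = Set.univ) :
    (Y : Set G) * (X : Set G) = Set.univ := by
  simpa [mul_inv_rev] using congrArg Inv.inv h

lemma ne_of_mul_eq_univ (hX : X ≠ ⊤) (h : (X : Set G) * (Y : Set G) = Set.univ) : X ≠ Y := by
  rintro rfl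
  exact hX (eq_top_of_mul_eq_univ le_rfl le_rfl h)

lemma mul_ne_univ_of_le (hY : Y ≠ ⊤) (hXY : X ≤ Y) : (X : Set G) * (Y : Set G) ≠ Set.univ :=
  fun h ↦ hY (eq_top_of_mul_eq_univ hXY le_rfl h)

lemma not_le_frattini_of_mul_eq_univ [IsCoatomic (Subgroup G)] (hY : Y ≠ ⊤)
    (h : (X : Set G) * (Y : Set G) = Set.univ) : ¬ X ≤ frattini G := fun hX ↦
  hY <| frattini_nongenerating <| eq_top_of_mul_eq_univ (le_sup_right.trans' hX) le_sup_left h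

end Subgroup

lemma exists_gt_ne_top_of_not_isCoatom {α : Type*} [PartialOrder α] [OrderTop α] {a : α}
    (ha : a ≠ ⊤) (h : ¬ IsCoatom a) : ∃ b, a < b ∧ b ≠ ⊤ := by
  contrapose! h
  exact ⟨ha, h⟩

open Subgroup in
lemma hasInducedSquare_of_lt_of_lt {G : Type*} [Group G] [IsCoatomic (Subgroup G)]
    {A B M N : Subgroup G} (hAB : (A : Set G) * (B : Set G) = Set.univ)
    (hAM : A < M) (hM : M ≠ ⊤) (hBN : B < N) (hN : N ≠ ⊤) : HasInducedSquare G := by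
  have hA : A ≠ ⊤ := ne_top_of_lt hAM
  have hB : B ≠ ⊤ := ne_top_of_lt hBN
  have hBA := mul_eq_univ_comm hAB
  have hBM : (B : Set G) * (M : Set G) = Set.univ := mul_eq_univ_of_le le_rfl hAM.le hBA
  have hMN : (M : Set G) * (N : Set G) = Set.univ := mul_eq_univ_of_le hAM.le hBN.le hAB
  have hNA : (N : Set G) * (A : Set G) = Set.univ := mul_eq_univ_of_le hBN.le le_rfl hBA
  exact ⟨A, B, M, N,
    ⟨hA, not_le_frattini_of_mul_eq_univ hB hAB⟩, ⟨hB, not_le_frattini_of_mul_eq_univ hM hBM⟩,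
    ⟨hM, not_le_frattini_of_mul_eq_univ hN hMN⟩, ⟨hN, not_le_frattini_of_mul_eq_univ hA hNA⟩,
    ne_of_mul_eq_univ hA hAB, hAM.ne, (ne_of_mul_eq_univ hN hNA).symm,
    ne_of_mul_eq_univ hB hBM, hBN.ne, ne_of_mul_eq_univ hM hMN,
    hAB, hBM, hMN, hNA, mul_ne_univ_of_le hM hAM.le, mul_ne_univ_of_le hN hBN.le⟩

theorem maximal_factor_of_square_free
    (G : Type*) [Group G] [Finite G]
    (hsf : ¬ HasInducedSquare G) :
    ∀ A B : Subgroup G, A ≠ ⊤ → B ≠ ⊤ →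
      (A : Set G) * (B : Set G) = Set.univ → IsCoatom A ∨ IsCoatom B := by
  intro A B hA hB hAB
  by_contra! hcon
  obtain ⟨M, hAM, hM⟩ := exists_gt_ne_top_of_not_isCoatom hA hcon.1
  obtain ⟨N, hBN, hN⟩ := exists_gt_ne_top_of_not_isCoatom hB hcon.2
  exact hsf (hasInducedSquare_of_lt_of_lt hAB hAM hM hBN hN)
end

section
/- Let G be a finite group whose factorization graph F(G) is bipartite with no isolated vertex and suppose d(G) = 2. Then G/Φ(G) ≅ C_p ⋊ C_q for distinct primes p and q, with every nontrivial proper subgroup of G/Φ(G) maximal. -/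
/-!
Pulling back along `G → G/Φ(G)` maps edges of the factorization graph of `Q = G/Φ(G)` (on its
nontrivial proper subgroups) to edges of the bipartite graph `F(G)`, and pushing forward keeps
neighbours because `Φ(G)` is nongenerating; so this graph is triangle-free without isolated
vertices.
If adjacent `A`, `B` met nontrivially, a neighbour of `A ⊓ B` would close a triangle, so adjacent
subgroups are complements. Then a proper overgroup of `A` would be a second complement of `B` of
larger order, so every nontrivial proper subgroup is maximal, and therefore of prime order.
Adjacent `A`, `B` of the same prime order `p` would give `|Q| = p²` and a third complement
`⟨ab⟩`, again a triangle; so `Q = A B` with `|A| = p > q = |B|`, and `A`, whose index is the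
smallest prime divisor of `|Q|`, is normal.
-/

open scoped Pointwise

namespace Subgroup

variable {G N : Type*} [Group G] [Group N]

theorem coe_mul_coe_eq_univ_comm {H K : Subgroup G}
    (h : (H : Set G) * (K : Set G) = Set.univ) : (K : Set G) * (H : Set G) = Set.univ := by
  rw [← inv_coe_set (H := K), ← inv_coe_set (H := H), ← mul_inv_rev, h, Set.inv_univ]

theorem coe_mul_coe_eq_univ_of_le {A B C D : Subgroup G} (hAC : A ≤ C) (hBD : B ≤ D)
    (h : (A : Set G) * (B : Set G) = Set.univ) : (C : Set G) * (D : Set G) = Set.univ :=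
  Set.eq_univ_of_univ_subset (h ▸ Set.mul_subset_mul hAC hBD)

theorem eq_top_of_coe_mul_self_eq_univ {H : Subgroup G}
    (h : (H : Set G) * (H : Set G) = Set.univ) : H = ⊤ :=
  coe_eq_univ.mp (Set.eq_univ_of_univ_subset (h ▸ mul_subset subset_rfl subset_rfl))

theorem coe_map_mul_coe_map_eq_univ {f : G →* N} (hf : Function.Surjective f)
    {A B : Subgroup G} (h : (A : Set G) * (B : Set G) = Set.univ) :
    (A.map f : Set N) * (B.map f : Set N) = Set.univ := by
  rw [coe_map, coe_map, ← Set.image_mul, h, Set.image_univ_of_surjective hf]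

theorem coe_comap_mul_coe_comap_eq_univ {f : G →* N} (hf : Function.Surjective f)
    {A B : Subgroup N} (h : (A : Set N) * (B : Set N) = Set.univ) :
    (A.comap f : Set G) * (B.comap f : Set G) = Set.univ := by
  refine Set.eq_univ_of_forall fun g => ?_
  obtain ⟨a, ha, b, hb, hab⟩ := h.symm ▸ Set.mem_univ (f g)
  obtain ⟨a', rfl⟩ := hf a
  refine ⟨a', ha, a'⁻¹ * g, ?_, mul_inv_cancel_left a' g⟩
  simpa [mem_comap, ← hab] using hb

theorem eq_of_le_of_forall_isCoatom (hco : ∀ H : Subgroup G, H ≠ ⊥ → H ≠ ⊤ → IsCoatom H)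
    {K H : Subgroup G} (hKH : K ≤ H) (hK : K ≠ ⊥) (hH : H ≠ ⊤) : K = H :=
  (((hco K hK (ne_top_of_le_ne_top hH hKH)).le_iff.mp hKH).resolve_left hH).symm

theorem inf_eq_bot_of_forall_isCoatom (hco : ∀ H : Subgroup G, H ≠ ⊥ → H ≠ ⊤ → IsCoatom H)
    {A B : Subgroup G} (hA : A ≠ ⊤) (hB : B ≠ ⊤) (hAB : A ≠ B) : A ⊓ B = ⊥ :=
  by_contra fun h => hAB <| (eq_of_le_of_forall_isCoatom hco inf_le_left h hA).symm.trans
    (eq_of_le_of_forall_isCoatom hco inf_le_right h hB)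

theorem normal_of_natCard_eq_of_lt {H : Subgroup G} {p q : ℕ} (hp : p.Prime) (hq : q.Prime)
    (hqp : q < p) (hG : Nat.card G = p * q) (hH : Nat.card H = p) : H.Normal := by
  have hindex : H.index = q := by
    have := H.card_mul_index
    rw [hH, hG] at this
    exact Nat.eq_of_mul_eq_mul_left hp.pos this
  have hmin := Nat.minFac_prime (hp.one_lt.trans_le (Nat.le_mul_of_pos_right p hq.pos)).ne'
  have hminFac : (p * q).minFac = q := by
    rcases (Nat.Prime.dvd_mul hmin).mp (Nat.minFac_dvd (p * q)) with h | h
    · have := Nat.minFac_le_of_dvd hq.two_le (dvd_mul_left q p)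
      rw [(Nat.prime_dvd_prime_iff_eq hmin hp).mp h] at this
      lia
    · exact (Nat.prime_dvd_prime_iff_eq hmin hq).mp h
  exact normal_of_index_eq_minFac_card (by rw [hindex, hG, hminFac])

variable [Finite G]

theorem natCard_prime_of_forall_isCoatom (hco : ∀ H : Subgroup G, H ≠ ⊥ → H ≠ ⊤ → IsCoatom H)
    {H : Subgroup G} (hH : H ≠ ⊥) (hH' : H ≠ ⊤) : (Nat.card H).Prime := by
  have hr : Fact (Nat.card H).minFac.Prime :=
    ⟨Nat.minFac_prime ((one_lt_card_iff_ne_bot H).mpr hH).ne'⟩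
  obtain ⟨x, hx⟩ := exists_prime_orderOf_dvd_card' _ (Nat.minFac_dvd (Nat.card H))
  have hx' : orderOf (x : G) = (Nat.card H).minFac := (orderOf_submonoid x).trans hx
  have hx1 : (x : G) ≠ 1 := fun h => hr.out.ne_one (hx' ▸ h ▸ orderOf_one)
  have hxH : zpowers (x : G) = H :=
    eq_of_le_of_forall_isCoatom hco (zpowers_le.mpr x.2) (zpowers_ne_bot.mpr hx1) hH'
  rw [← hxH, Nat.card_zpowers, hx']
  exact hr.out

end Subgroup

/-- The factorization graph `F(Q)` of a group with `Φ(Q) = 1`, except that `⊥` and `⊤` are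
isolated points instead of non-vertices. -/
def factorizationGraph (Q : Type*) [Group Q] : SimpleGraph (Subgroup Q) where
  Adj A B := A ≠ ⊥ ∧ A ≠ ⊤ ∧ B ≠ ⊥ ∧ B ≠ ⊤ ∧ (A : Set Q) * (B : Set Q) = Set.univ
  symm := ⟨fun _ _ ⟨hA, hA', hB, hB', h⟩ =>
    ⟨hB, hB', hA, hA', Subgroup.coe_mul_coe_eq_univ_comm h⟩⟩
  loopless := ⟨fun _ ⟨_, hA, _, _, h⟩ => hA (Subgroup.eq_top_of_coe_mul_self_eq_univ h)⟩

@[simp]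
theorem factorizationGraph_adj {Q : Type*} [Group Q] {A B : Subgroup Q} :
    (factorizationGraph Q).Adj A B ↔
      A ≠ ⊥ ∧ A ≠ ⊤ ∧ B ≠ ⊥ ∧ B ≠ ⊤ ∧ (A : Set Q) * (B : Set Q) = Set.univ :=
  Iff.rfl

structure HasTriangleFreeFactorizationGraph (Q : Type*) [Group Q] : Prop where
  cliqueFree : (factorizationGraph Q).CliqueFree 3
  exists_adj : ∀ A : Subgroup Q, A ≠ ⊥ → A ≠ ⊤ → ∃ B, (factorizationGraph Q).Adj A B

theorem factorizationGraph_adj_of_natCard_mul_natCard_eq {Q : Type*} [Group Q] [Finite Q]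
    (hco : ∀ H : Subgroup Q, H ≠ ⊥ → H ≠ ⊤ → IsCoatom H) {A B : Subgroup Q}
    (hA : A ≠ ⊥) (hA' : A ≠ ⊤) (hB : B ≠ ⊥) (hB' : B ≠ ⊤) (hAB : A ≠ B)
    (hcard : Nat.card A * Nat.card B = Nat.card Q) : (factorizationGraph Q).Adj A B :=
  factorizationGraph_adj.mpr ⟨hA, hA', hB, hB',
    (Subgroup.isComplement'_of_card_mul_and_disjoint hcard
      (disjoint_iff.mpr (Subgroup.inf_eq_bot_of_forall_isCoatom hco hA' hB' hAB))).mul_eq⟩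

namespace HasTriangleFreeFactorizationGraph

variable {Q : Type*} [Group Q]

theorem inf_eq_bot_of_adj (hQ : HasTriangleFreeFactorizationGraph Q) {A B : Subgroup Q}
    (hAB : (factorizationGraph Q).Adj A B) : A ⊓ B = ⊥ := by
  classical
  obtain ⟨hA, hA', hB, hB', -⟩ := factorizationGraph_adj.mp hAB
  by_contra hAB_ne
  obtain ⟨L, hL⟩ := hQ.exists_adj (A ⊓ B) hAB_ne (ne_top_of_le_ne_top hA' inf_le_left)
  obtain ⟨-, -, hL, hL', hL_mul⟩ := factorizationGraph_adj.mp hL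
  refine hQ.cliqueFree {A, B, L} (SimpleGraph.is3Clique_triple_iff.mpr ⟨hAB, ?_, ?_⟩)
  · exact factorizationGraph_adj.mpr
      ⟨hA, hA', hL, hL', Subgroup.coe_mul_coe_eq_univ_of_le inf_le_left le_rfl hL_mul⟩
  · exact factorizationGraph_adj.mpr
      ⟨hB, hB', hL, hL', Subgroup.coe_mul_coe_eq_univ_of_le inf_le_right le_rfl hL_mul⟩

theorem isComplement'_of_adj (hQ : HasTriangleFreeFactorizationGraph Q) {A B : Subgroup Q}
    (hAB : (factorizationGraph Q).Adj A B) : A.IsComplement' B :=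
  Subgroup.isComplement'_of_disjoint_and_mul_eq_univ
    (disjoint_iff.mpr (hQ.inf_eq_bot_of_adj hAB)) (factorizationGraph_adj.mp hAB).2.2.2.2

theorem exists_adj_of_not_isCyclic (hQ : HasTriangleFreeFactorizationGraph Q)
    (hnc : ¬ IsCyclic Q) : ∃ A B, (factorizationGraph Q).Adj A B := by
  have : Nontrivial Q :=
    not_subsingleton_iff_nontrivial.mp fun _ => hnc isCyclic_of_subsingleton
  obtain ⟨z, hz⟩ := exists_ne (1 : Q)
  have hz' : Subgroup.zpowers z ≠ ⊤ := fun h =>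
    hnc (isCyclic_iff_exists_zpowers_eq_top.mpr ⟨z, h⟩)
  exact ⟨_, hQ.exists_adj _ (Subgroup.zpowers_ne_bot.mpr hz) hz'⟩

variable [Finite Q]

theorem isCoatom (hQ : HasTriangleFreeFactorizationGraph Q) {A : Subgroup Q} (hA : A ≠ ⊥)
    (hA' : A ≠ ⊤) : IsCoatom A := by
  refine ⟨hA', fun M hAM => by_contra fun hM' => hAM.ne ?_⟩
  obtain ⟨B, hAB⟩ := hQ.exists_adj A hA hA'
  obtain ⟨-, -, hB, hB', h⟩ := factorizationGraph_adj.mp hAB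
  have hMB : (factorizationGraph Q).Adj M B := factorizationGraph_adj.mpr
    ⟨ne_bot_of_le_ne_bot hA hAM.le, hM', hB, hB',
      Subgroup.coe_mul_coe_eq_univ_of_le hAM.le le_rfl h⟩
  refine Subgroup.eq_of_le_of_card_ge hAM.le
    (Nat.le_of_mul_le_mul_right ?_ (Nat.card_pos (α := B)))
  rw [(hQ.isComplement'_of_adj hAB).card_mul_card, (hQ.isComplement'_of_adj hMB).card_mul_card]

-- If `|A| = |B| = p` then `|Q| = p²`, and `⟨ab⟩` is a third subgroup of order `p` adjacent to
-- both.
theorem natCard_ne_of_adj (hQ : HasTriangleFreeFactorizationGraph Q) (hnc : ¬ IsCyclic Q)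
    {A B : Subgroup Q} (hAB : (factorizationGraph Q).Adj A B) : Nat.card A ≠ Nat.card B := by
  classical
  intro hcard
  have hco := fun H : Subgroup Q => hQ.isCoatom (A := H)
  obtain ⟨hA, hA', hB, hB', -⟩ := factorizationGraph_adj.mp hAB
  have hQcard := (hQ.isComplement'_of_adj hAB).card_mul_card
  rw [← hcard] at hQcard
  have hdisj : ∀ x ∈ A, x ∈ B → x = 1 := fun _ =>
    Subgroup.disjoint_def.mp (hQ.isComplement'_of_adj hAB).disjoint
  obtain ⟨a, haA, ha⟩ := A.bot_or_exists_ne_one.resolve_left hA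
  obtain ⟨b, hbB, hb⟩ := B.bot_or_exists_ne_one.resolve_left hB
  have habA : a * b ∉ A := fun h => hb (hdisj b ((A.mul_mem_cancel_left haA).mp h) hbB)
  have habB : a * b ∉ B := fun h => ha (hdisj a haA ((B.mul_mem_cancel_right hbB).mp h))
  set C := Subgroup.zpowers (a * b)
  have hC : C ≠ ⊥ := Subgroup.zpowers_ne_bot.mpr fun h => habA (h ▸ A.one_mem)
  have hC' : C ≠ ⊤ := fun h => hnc (isCyclic_iff_exists_zpowers_eq_top.mpr ⟨_, h⟩)
  have hCcard : Nat.card C = Nat.card A := by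
    have hCprime := Subgroup.natCard_prime_of_forall_isCoatom hco hC hC'
    have hdvd : Nat.card C ∣ Nat.card A * Nat.card A := hQcard ▸ C.card_subgroup_dvd_card
    exact (Nat.prime_dvd_prime_iff_eq hCprime
      (Subgroup.natCard_prime_of_forall_isCoatom hco hA hA')).mp
        ((hCprime.dvd_mul.mp hdvd).elim id id)
  refine hQ.cliqueFree {A, B, C} (SimpleGraph.is3Clique_triple_iff.mpr ⟨hAB, ?_, ?_⟩)
  · exact factorizationGraph_adj_of_natCard_mul_natCard_eq hco hA hA' hC hC'
      (fun h => habA (h ▸ Subgroup.mem_zpowers _)) (by rw [hCcard, hQcard])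
  · exact factorizationGraph_adj_of_natCard_mul_natCard_eq hco hB hB' hC hC'
      (fun h => habB (h ▸ Subgroup.mem_zpowers _)) (by rw [hCcard, ← hcard, hQcard])

theorem exists_prime_semidirect (hQ : HasTriangleFreeFactorizationGraph Q)
    (hnc : ¬ IsCyclic Q) :
    ∃ p q : ℕ, p.Prime ∧ q.Prime ∧ p ≠ q ∧
      (∃ P R : Subgroup Q,
        Nat.card P = p ∧ Nat.card R = q ∧ P.Normal ∧ P ⊓ R = ⊥ ∧ P ⊔ R = ⊤) ∧
      (∀ H : Subgroup Q, H ≠ ⊥ → H ≠ ⊤ → IsCoatom H) := by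
  obtain ⟨A, B, hAB⟩ := hQ.exists_adj_of_not_isCyclic hnc
  wlog hlt : Nat.card B < Nat.card A generalizing A B
  · exact this B A hAB.symm ((not_lt.mp hlt).lt_of_ne (hQ.natCard_ne_of_adj hnc hAB))
  have hco := fun H : Subgroup Q => hQ.isCoatom (A := H)
  obtain ⟨hA, hA', hB, hB', -⟩ := factorizationGraph_adj.mp hAB
  have hcompl := hQ.isComplement'_of_adj hAB
  have hpA := Subgroup.natCard_prime_of_forall_isCoatom hco hA hA'
  have hpB := Subgroup.natCard_prime_of_forall_isCoatom hco hB hB'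
  refine ⟨_, _, hpA, hpB, hlt.ne', ⟨A, B, rfl, rfl, ?_, disjoint_iff.mp hcompl.disjoint,
    hcompl.sup_eq_top⟩, hco⟩
  exact Subgroup.normal_of_natCard_eq_of_lt hpA hpB hlt hcompl.card_mul_card.symm rfl

end HasTriangleFreeFactorizationGraph

section Frattini

open QuotientGroup

variable {G : Type*} [Group G]

theorem QuotientGroup.comap_mk'_ne_top {N : Subgroup G} [N.Normal] {X : Subgroup (G ⧸ N)}
    (hX : X ≠ ⊤) : X.comap (mk' N) ≠ ⊤ :=
  fun h => hX <|
    Subgroup.comap_injective (mk'_surjective N) (h.trans (Subgroup.comap_top (mk' N)).symm)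

theorem QuotientGroup.not_comap_mk'_le {N : Subgroup G} [N.Normal] {X : Subgroup (G ⧸ N)}
    (hX : X ≠ ⊥) : ¬ X.comap (mk' N) ≤ N := by
  rwa [Ne, ← le_bot_iff, ← Subgroup.comap_le_comap_of_surjective (mk'_surjective N),
    MonoidHom.comap_bot, ker_mk'] at hX

variable [Finite G]

theorem map_mk'_frattini_eq_top_iff {K : Subgroup G} :
    K.map (mk' (frattini G)) = ⊤ ↔ K = ⊤ := by
  refine ⟨fun h => frattini_nongenerating ?_,
    fun h => h ▸ Subgroup.map_top_of_surjective _ (mk'_surjective _)⟩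
  rw [← ker_mk' (frattini G), ← Subgroup.comap_map_eq, h, Subgroup.comap_top]

theorem not_isCyclic_quotient_frattini (h : ¬ IsCyclic G) : ¬ IsCyclic (G ⧸ frattini G) := by
  rw [isCyclic_iff_exists_zpowers_eq_top] at h ⊢
  rintro ⟨x, hx⟩
  obtain ⟨g, rfl⟩ := mk'_surjective (frattini G) x
  exact h ⟨g, map_mk'_frattini_eq_top_iff.mp (by rw [MonoidHom.map_zpowers]; exact hx)⟩

theorem hasTriangleFreeFactorizationGraph_quotient_frattini {U V : Set (Subgroup G)}
    (hUV : Disjoint U V)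
    (hedge : ∀ H K : Subgroup G, H ≠ ⊤ → ¬ H ≤ frattini G → K ≠ ⊤ → ¬ K ≤ frattini G →
      (H : Set G) * (K : Set G) = Set.univ → (H ∈ U ∧ K ∈ V) ∨ (H ∈ V ∧ K ∈ U))
    (hiso : ∀ H : Subgroup G, H ≠ ⊤ → ¬ H ≤ frattini G →
      ∃ K : Subgroup G, K ≠ ⊤ ∧ ¬ K ≤ frattini G ∧ (H : Set G) * (K : Set G) = Set.univ) :
    HasTriangleFreeFactorizationGraph (G ⧸ frattini G) where
  cliqueFree s hs := by
    classical
    obtain ⟨A, B, C, hAB, hAC, hBC, -⟩ := SimpleGraph.is3Clique_iff.mp hs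
    have lift : ∀ {X Y}, (factorizationGraph (G ⧸ frattini G)).Adj X Y →
        (X.comap (mk' _) ∈ U ∧ Y.comap (mk' _) ∈ V) ∨
          (X.comap (mk' _) ∈ V ∧ Y.comap (mk' _) ∈ U) := fun hXY => by
      obtain ⟨hX, hX', hY, hY', h⟩ := factorizationGraph_adj.mp hXY
      exact hedge _ _ (comap_mk'_ne_top hX') (not_comap_mk'_le hX)
        (comap_mk'_ne_top hY') (not_comap_mk'_le hY)
        (Subgroup.coe_comap_mul_coe_comap_eq_univ (mk'_surjective _) h)
    have := Set.disjoint_left.mp hUV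
    have := lift hAB
    have := lift hAC
    have := lift hBC
    tauto
  exists_adj A hA hA' := by
    obtain ⟨K, hK, hK', hAK⟩ := hiso _ (comap_mk'_ne_top hA') (not_comap_mk'_le hA)
    refine ⟨K.map (mk' _), factorizationGraph_adj.mpr ⟨hA, hA', ?_, ?_, ?_⟩⟩
    · rwa [Ne, Subgroup.map_eq_bot_iff, ker_mk']
    · rwa [Ne, map_mk'_frattini_eq_top_iff]
    · simpa only [Subgroup.map_comap_eq_self_of_surjective (mk'_surjective _)] using
        Subgroup.coe_map_mul_coe_map_eq_univ (mk'_surjective (frattini G)) hAK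

end Frattini

theorem quotient_frattini_structure_of_bipartite_two_generated_general
    (G : Type*) [Group G] [Finite G]
    -- d(G) = 2 : two-generated but not cyclic
    (hnc : ¬ IsCyclic G)
    -- F(G) is bipartite with no isolated vertex
    (hbipartite : ∃ U V : Set (Subgroup G),
      (∀ H : Subgroup G, (H ∈ U ∨ H ∈ V) ↔ (H ≠ ⊤ ∧ ¬ H ≤ frattini G)) ∧
      Disjoint U V ∧
      (∀ H K : Subgroup G, H ≠ ⊤ → ¬ H ≤ frattini G → K ≠ ⊤ → ¬ K ≤ frattini G →
        (H : Set G) * (K : Set G) = Set.univ →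
        (H ∈ U ∧ K ∈ V) ∨ (H ∈ V ∧ K ∈ U)) ∧
      (∀ H : Subgroup G, H ≠ ⊤ → ¬ H ≤ frattini G →
        ∃ K : Subgroup G, K ≠ ⊤ ∧ ¬ K ≤ frattini G ∧
          (H : Set G) * (K : Set G) = Set.univ)) :
    ∃ p q : ℕ, p.Prime ∧ q.Prime ∧ p ≠ q ∧
      (∃ P Q : Subgroup (G ⧸ frattini G),
        Nat.card P = p ∧ Nat.card Q = q ∧ P.Normal ∧ P ⊓ Q = ⊥ ∧ P ⊔ Q = ⊤) ∧
      (∀ H : Subgroup (G ⧸ frattini G), H ≠ ⊥ → H ≠ ⊤ → IsCoatom H) := by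
  obtain ⟨U, V, -, hUV, hedge, hiso⟩ := hbipartite
  have hQ := hasTriangleFreeFactorizationGraph_quotient_frattini hUV hedge hiso
  exact hQ.exists_prime_semidirect (not_isCyclic_quotient_frattini hnc)

theorem quotient_frattini_structure_of_bipartite_two_generated
    (G : Type*) [Group G] [Finite G]
    -- d(G) = 2 : two-generated but not cyclic
    (htwo : ∃ a b : G, Subgroup.closure {a, b} = ⊤)
    (hnc : ¬ IsCyclic G)
    -- F(G) is bipartite with no isolated vertex
    (hbipartite : ∃ U V : Set (Subgroup G),
      (∀ H : Subgroup G, (H ∈ U ∨ H ∈ V) ↔ (H ≠ ⊤ ∧ ¬ H ≤ frattini G)) ∧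
      Disjoint U V ∧
      (∀ H K : Subgroup G, H ≠ ⊤ → ¬ H ≤ frattini G → K ≠ ⊤ → ¬ K ≤ frattini G →
        (H : Set G) * (K : Set G) = Set.univ →
        (H ∈ U ∧ K ∈ V) ∨ (H ∈ V ∧ K ∈ U)) ∧
      (∀ H : Subgroup G, H ≠ ⊤ → ¬ H ≤ frattini G →
        ∃ K : Subgroup G, K ≠ ⊤ ∧ ¬ K ≤ frattini G ∧
          (H : Set G) * (K : Set G) = Set.univ)) :
    ∃ p q : ℕ, p.Prime ∧ q.Prime ∧ p ≠ q ∧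
      (∃ P Q : Subgroup (G ⧸ frattini G),
        Nat.card P = p ∧ Nat.card Q = q ∧ P.Normal ∧ P ⊓ Q = ⊥ ∧ P ⊔ Q = ⊤) ∧
      (∀ H : Subgroup (G ⧸ frattini G), H ≠ ⊥ → H ≠ ⊤ → IsCoatom H) :=
  quotient_frattini_structure_of_bipartite_two_generated_general G hnc hbipartite
end
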